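/- For every natural numbers d ≥ 1 and n with n ≥ d, there exists a constant C̃ ≥ 0, independent of ω, such that for all real ω ≥ 1, sup_{t∈[0,t*]} ‖E_n^d(t)‖ ≤ C̃·ω^{−n}. -/

import Mathlib

noncomputable section

variable {A : Type*} [NormedRing A] [NormedAlgebra ℂ A] [CompleteSpace A]

/-- Iterated commutator: `adL L 0 x = x`, `adL L (k+1) x = L·(adL L k x) − (adL L k x)·L`. -/
def adL (L : A) : ℕ → A → A
  | 0, x => x
  | k+1, x => L * adL L k x - adL L k x * L

/-- `Nop L α k l r` is the operator `N(l,r)` relative to the multi-index `k` (1-based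
entries `k 1, k 2, …`): `N(l,r) = ad_L^{k_l}(α)` if `l = r`,
`N(l,r) = ad_L^{k_r}(α·N(l,r−1))` if `l < r`, and `N(l,r) = 1` if `l > r`. -/
def Nop (L α : A) (k : ℕ → ℕ) (l : ℕ) : ℕ → A
  | 0 => if l = 0 then adL L (k 0) α else 1
  | r+1 =>
    if r + 1 < l then 1
    else if l = r + 1 then adL L (k (r + 1)) α
    else adL L (k (r + 1)) (α * Nop L α k l r)

/-- The coefficients `a_j^ℓ = ∏_{r=0}^{j−1} (j−r)^{−(k_{ℓ−r}+1)}` (with `a_0^ℓ = 1`),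
viewed as complex scalars. -/
def coefA (k : ℕ → ℕ) (j ℓ : ℕ) : ℂ :=
  ∏ r ∈ Finset.range j, (((j - r : ℕ) : ℂ) ^ (k (ℓ - r) + 1))⁻¹

/-- The coefficients `b_j^ℓ = j^{−k_ℓ}·∏_{r=1}^{j−1} (j−r)^{−(k_{ℓ−r}+1)}` for `j ≥ 1`
(with `b_0^ℓ = 1`), viewed as complex scalars. -/
def coefB (k : ℕ → ℕ) (j ℓ : ℕ) : ℂ :=
  if j = 0 then 1
  else ((j : ℂ) ^ (k ℓ))⁻¹ * ∏ r ∈ Finset.Ico 1 j, (((j - r : ℕ) : ℂ) ^ (k (ℓ - r) + 1))⁻¹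

/-- `Fc L α k ℓ` is `F_ℓ`: `F₀ = 1`, `F_ℓ = −Σ_{m=0}^{ℓ−1} a_{ℓ−m}^ℓ·N(m+1,ℓ)·F_m`. -/
def Fc (L α : A) (k : ℕ → ℕ) : ℕ → A
  | 0 => 1
  | ℓ+1 => -∑ m ∈ (Finset.range (ℓ + 1)).attach,
      coefA k (ℓ + 1 - m.1) (ℓ + 1) • (Nop L α k (m.1 + 1) (ℓ + 1) * Fc L α k m.1)
  decreasing_by exact Finset.mem_range.mp m.2

/-- Extension of a `d`-tuple `κ = (k₁,…,k_d)` to a 1-based sequence `ℕ → ℕ`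
(with `kfun d κ i = k_i` for `1 ≤ i ≤ d`). -/
def kfun (d : ℕ) (κ : Fin d → ℕ) : ℕ → ℕ :=
  fun i => if h : 1 ≤ i ∧ i ≤ d then κ ⟨i - 1, by omega⟩ else 0

/-- The `d`-times nested oscillatory integral `G_d(t) = T^d e^{tL} u₀`:
`G₀(t) = exp(tL)·u₀`, `G_d(t) = ∫₀ᵗ exp((t−τ)L)·α·e^{iωτ}·G_{d−1}(τ) dτ`. -/
def Gfun (L α u₀ : A) (ω : ℝ) : ℕ → ℝ → A
  | 0, t => NormedSpace.exp ((t : ℂ) • L) * u₀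
  | d+1, t => ∫ τ in (0:ℝ)..t,
      Complex.exp (Complex.I * ω * τ) •
        (NormedSpace.exp (((t - τ : ℝ) : ℂ) • L) * α * Gfun L α u₀ ω d τ)

/-- The finite series
`S_n^d(t) = Σ_{k∈ℕ^d, 0 ≤ |k^d| ≤ n−d} (iω)^{−(d+|k^d|)} ·
  Σ_{ℓ=0}^{d} a_{d−ℓ}^d · e^{(d−ℓ)iωt} · N(ℓ+1,d) · exp(tL) · F_ℓ · u₀`. -/
def Sser (L α u₀ : A) (ω : ℝ) (n d : ℕ) (t : ℝ) : A :=
  ∑ m ∈ Finset.range (n - d + 1), ∑ κ ∈ Finset.Nat.antidiagonalTuple d m,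
    ((Complex.I * ω) ^ (d + m))⁻¹ •
      ∑ ℓ ∈ Finset.range (d + 1),
        (coefA (kfun d κ) (d - ℓ) d *
            Complex.exp (((d - ℓ : ℕ) : ℂ) * (Complex.I * ω * t))) •
          (Nop L α (kfun d κ) (ℓ + 1) d *
            (NormedSpace.exp ((t : ℂ) • L) * (Fc L α (kfun d κ) ℓ * u₀)))

/-- The remainder: `E_n^0(t) = 0` and
`E_n^d(t) = (iω)^{−n} · Σ_{k∈ℕ^d, |k^d| = n−d+1} Σ_{ℓ=0}^{d−1} b_{d−ℓ}^d ·
  (∫₀ᵗ exp((t−τ)L)·N(ℓ+1,d)·exp(τL)·e^{(d−ℓ)iωτ} dτ) · F_ℓ · u₀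
  + ∫₀ᵗ exp((t−τ)L)·α·e^{iωτ}·E_n^{d−1}(τ) dτ`. -/
def Eser (L α u₀ : A) (ω : ℝ) (n : ℕ) : ℕ → ℝ → A
  | 0, _ => 0
  | d+1, t =>
    ((Complex.I * ω) ^ n)⁻¹ •
      (∑ κ ∈ Finset.Nat.antidiagonalTuple (d + 1) (n - (d + 1) + 1),
        ∑ ℓ ∈ Finset.range (d + 1),
          coefB (kfun (d + 1) κ) (d + 1 - ℓ) (d + 1) •
            ((∫ τ in (0:ℝ)..t,
                Complex.exp (((d + 1 - ℓ : ℕ) : ℂ) * (Complex.I * ω * τ)) •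
                  (NormedSpace.exp (((t - τ : ℝ) : ℂ) • L) *
                    Nop L α (kfun (d + 1) κ) (ℓ + 1) (d + 1) *
                    NormedSpace.exp ((τ : ℂ) • L))) *
              (Fc L α (kfun (d + 1) κ) ℓ * u₀)))
    + ∫ τ in (0:ℝ)..t,
        Complex.exp (Complex.I * ω * τ) •
          (NormedSpace.exp (((t - τ : ℝ) : ℂ) • L) * α * Eser L α u₀ ω n d τ)

/-!
Induction on `d`. The oscillatory factors `e^{j iωτ}` have modulus one, so the source terms of
`E_n^d` are bounded uniformly in `ω`, and all the decay comes from the explicit prefactor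
`(iω)^{-n}`; the Duhamel integral of `E_n^{d-1}` keeps that decay, at the cost of the
factor `sup ‖e^{sL}‖ · ‖α‖ · T`.
-/

open Set

lemma exists_norm_exp_smul_le (L : A) (T : ℝ) :
    ∃ M : ℝ, ∀ s ∈ Icc 0 T, ‖NormedSpace.exp ((s : ℂ) • L)‖ ≤ M := by
  have hexp : Continuous (NormedSpace.exp : A → A) :=
    continuous_iff_continuousAt.2 fun x => (NormedSpace.exp_analytic (𝕂 := ℂ) x).continuousAt
  have hcont : Continuous fun s : ℝ => NormedSpace.exp ((s : ℂ) • L) :=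
    hexp.comp (Complex.continuous_ofReal.smul continuous_const)
  exact isCompact_Icc.exists_bound_of_continuousOn hcont.continuousOn

omit [CompleteSpace A] in
lemma norm_integral_smul_exp_mul_mul_le {L X : A} {f : ℝ → A} {c : ℝ → ℂ} {M B T t : ℝ}
    (hc : ∀ τ, ‖c τ‖ ≤ 1) (hM : ∀ s ∈ Icc 0 T, ‖NormedSpace.exp ((s : ℂ) • L)‖ ≤ M)
    (hf : ∀ τ ∈ Icc 0 T, ‖f τ‖ ≤ B) (ht : t ∈ Icc 0 T) :
    ‖∫ τ in (0 : ℝ)..t, c τ • (NormedSpace.exp (((t - τ : ℝ) : ℂ) • L) * X * f τ)‖ ≤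
      M * ‖X‖ * B * T := by
  obtain ⟨ht0, htT⟩ := ht
  have h0 : (0 : ℝ) ∈ Icc 0 T := ⟨le_rfl, ht0.trans htT⟩
  have hM0 : 0 ≤ M := (norm_nonneg _).trans (hM 0 h0)
  have hB0 : 0 ≤ B := (norm_nonneg _).trans (hf 0 h0)
  have hbound : ∀ τ ∈ uIoc (0 : ℝ) t,
      ‖c τ • (NormedSpace.exp (((t - τ : ℝ) : ℂ) • L) * X * f τ)‖ ≤ M * ‖X‖ * B := by
    intro τ hτ
    rw [uIoc_of_le ht0] at hτ
    have hexp := hM (t - τ) ⟨by linarith [hτ.2], by linarith [hτ.1]⟩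
    have hfτ := hf τ ⟨hτ.1.le, hτ.2.trans htT⟩
    calc ‖c τ • (NormedSpace.exp (((t - τ : ℝ) : ℂ) • L) * X * f τ)‖
        ≤ 1 * (‖NormedSpace.exp (((t - τ : ℝ) : ℂ) • L)‖ * ‖X‖ * ‖f τ‖) := by
          rw [norm_smul]
          gcongr
          · exact hc τ
          · exact (norm_mul_le _ _).trans (by gcongr; exact norm_mul_le _ _)
      _ ≤ M * ‖X‖ * B := by rw [one_mul]; gcongr
  calc _ ≤ M * ‖X‖ * B * |t - 0| := intervalIntegral.norm_integral_le_of_norm_le_const hbound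
    _ ≤ M * ‖X‖ * B * T := by rw [sub_zero, abs_of_nonneg ht0]; gcongr

lemma norm_cexp_nat_mul_I_mul_le_one (m : ℕ) (ω τ : ℝ) :
    ‖Complex.exp ((m : ℂ) * (Complex.I * ω * τ))‖ ≤ 1 := by
  simp [Complex.norm_exp]

def remainderSource (L α u₀ : A) (ω : ℝ) (n d : ℕ) (t : ℝ) : A :=
  ∑ κ ∈ Finset.Nat.antidiagonalTuple (d + 1) (n - (d + 1) + 1),
    ∑ ℓ ∈ Finset.range (d + 1),
      coefB (kfun (d + 1) κ) (d + 1 - ℓ) (d + 1) •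
        ((∫ τ in (0:ℝ)..t,
            Complex.exp (((d + 1 - ℓ : ℕ) : ℂ) * (Complex.I * ω * τ)) •
              (NormedSpace.exp (((t - τ : ℝ) : ℂ) • L) *
                Nop L α (kfun (d + 1) κ) (ℓ + 1) (d + 1) *
                NormedSpace.exp ((τ : ℂ) • L))) *
          (Fc L α (kfun (d + 1) κ) ℓ * u₀))

omit [CompleteSpace A] in
lemma Eser_succ (L α u₀ : A) (ω : ℝ) (n d : ℕ) (t : ℝ) :
    Eser L α u₀ ω n (d + 1) t =
      ((Complex.I * ω) ^ n)⁻¹ • remainderSource L α u₀ ω n d t +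
        ∫ τ in (0:ℝ)..t, Complex.exp (Complex.I * ω * τ) •
          (NormedSpace.exp (((t - τ : ℝ) : ℂ) • L) * α * Eser L α u₀ ω n d τ) :=
  rfl

lemma exists_norm_remainderSource_le (L α u₀ : A) (T : ℝ) (n d : ℕ) :
    ∃ B : ℝ, ∀ ω t, t ∈ Icc 0 T → ‖remainderSource L α u₀ ω n d t‖ ≤ B := by
  obtain ⟨M, hM⟩ := exists_norm_exp_smul_le L T
  refine ⟨∑ κ ∈ Finset.Nat.antidiagonalTuple (d + 1) (n - (d + 1) + 1),
    ∑ ℓ ∈ Finset.range (d + 1), ‖coefB (kfun (d + 1) κ) (d + 1 - ℓ) (d + 1)‖ *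
      (M * ‖Nop L α (kfun (d + 1) κ) (ℓ + 1) (d + 1)‖ * M * T *
        ‖Fc L α (kfun (d + 1) κ) ℓ * u₀‖), fun ω t ht => ?_⟩
  refine (norm_sum_le _ _).trans (Finset.sum_le_sum fun κ _ => ?_)
  refine (norm_sum_le _ _).trans (Finset.sum_le_sum fun ℓ _ => ?_)
  rw [norm_smul]
  gcongr
  refine (norm_mul_le _ _).trans ?_
  gcongr
  exact norm_integral_smul_exp_mul_mul_le (norm_cexp_nat_mul_I_mul_le_one _ ω) hM hM ht

theorem exists_norm_Eser_le (L α u₀ : A) (T : ℝ) (n d : ℕ) :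
    ∃ C : ℝ, ∀ ω t, t ∈ Icc 0 T → ‖Eser L α u₀ ω n d t‖ ≤ C * (|ω| ^ n)⁻¹ := by
  obtain ⟨M, hM⟩ := exists_norm_exp_smul_le L T
  induction d with
  | zero => exact ⟨0, fun _ _ _ => by simp [Eser]⟩
  | succ d ih =>
    obtain ⟨C, hC⟩ := ih
    obtain ⟨B, hB⟩ := exists_norm_remainderSource_le L α u₀ T n d
    refine ⟨B + M * ‖α‖ * C * T, fun ω t ht => ?_⟩
    have hsource : ‖((Complex.I * ω) ^ n)⁻¹ • remainderSource L α u₀ ω n d t‖ ≤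
        (|ω| ^ n)⁻¹ * B := by
      rw [norm_smul]
      simpa using mul_le_mul_of_nonneg_left (hB ω t ht) (by positivity : 0 ≤ (|ω| ^ n)⁻¹)
    have hduhamel := norm_integral_smul_exp_mul_mul_le (X := α)
      (c := fun τ => Complex.exp (Complex.I * ω * τ))
      (fun τ => by simpa using norm_cexp_nat_mul_I_mul_le_one 1 ω τ) hM (hC ω) ht
    calc ‖Eser L α u₀ ω n (d + 1) t‖
        ≤ (|ω| ^ n)⁻¹ * B + M * ‖α‖ * (C * (|ω| ^ n)⁻¹) * T := by
          rw [Eser_succ]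
          exact (norm_add_le _ _).trans (add_le_add hsource hduhamel)
      _ = (B + M * ‖α‖ * C * T) * (|ω| ^ n)⁻¹ := by ring

theorem stmt13_general (L α u₀ : A) (T : ℝ) (d n : ℕ) :
    ∃ C : ℝ, 0 ≤ C ∧ ∀ ω : ℝ, 1 ≤ ω → ∀ t ∈ Set.Icc (0:ℝ) T,
      ‖Eser L α u₀ ω n d t‖ ≤ C * (ω ^ n)⁻¹ := by
  obtain ⟨C, hC⟩ := exists_norm_Eser_le L α u₀ T n d
  refine ⟨max C 0, le_max_right _ _, fun ω hω t ht => ?_⟩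
  calc ‖Eser L α u₀ ω n d t‖ ≤ C * (|ω| ^ n)⁻¹ := hC ω t ht
    _ ≤ max C 0 * (ω ^ n)⁻¹ := by
      rw [abs_of_pos (by linarith)]
      gcongr
      exact le_max_left _ _

/-- For every `d ≥ 1` and `n ≥ d`, there exists a constant `C̃ ≥ 0`,
independent of `ω`, such that for all real `ω ≥ 1`,
`sup_{t∈[0,t*]} ‖E_n^d(t)‖ ≤ C̃·ω^{−n}`. -/
theorem stmt13 (L α u₀ : A) (T : ℝ) (hT : 0 < T)
    (d n : ℕ) (hd : 1 ≤ d) (hnd : d ≤ n) :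
    ∃ C : ℝ, 0 ≤ C ∧ ∀ ω : ℝ, 1 ≤ ω → ∀ t ∈ Set.Icc (0:ℝ) T,
      ‖Eser L α u₀ ω n d t‖ ≤ C * (ω ^ n)⁻¹ :=
  stmt13_general L α u₀ T d n
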